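/- arXiv:1705.05827 — 3 statements merged into one kernel-verified Lean document; each statement's English description precedes it below -/
import Mathlib

section
/- The two-sided group digraph 2S(G;L,R) is strongly connected if and only if G = W(L⁻¹)W(R) = W(L)W(R⁻¹) and there exist i, j ∈ ℕ such that the identity e can be written as a word in L⁻¹ of length i+1 times a word in R of length i, and also as a word in L⁻¹ of length j times a word in R of length j+1. -/
open Relation Pointwise

/-- `w` is a product of a list of `n` elements of `S`. -/
def IsWord {G : Type*} [Group G] (S : Set G) (n : ℕ) (w : G) : Prop :=
  ∃ l : List G, l.length = n ∧ (∀ x ∈ l, x ∈ S) ∧ l.prod = w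

/-- The set of all positive-length words in `S`. -/
def WordSet {G : Type*} [Group G] (S : Set G) : Set G :=
  {w | ∃ n : ℕ, 0 < n ∧ IsWord S n w}

/-- Arc of the two-sided group digraph `2S(G;L,R)`. -/
def Arc {G : Type*} [Group G] (L R : Set G) (g h : G) : Prop :=
  ∃ l ∈ L, ∃ r ∈ R, h = l⁻¹ * g * r

/-- Existence of a directed path (possibly of length 0). -/
def DPath {G : Type*} [Group G] (L R : Set G) : G → G → Prop :=
  ReflTransGen (Arc L R)

/-- Weak connectivity: path ignoring directions. -/
def WeakConn {G : Type*} [Group G] (L R : Set G) : G → G → Prop :=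
  ReflTransGen (fun g h => Arc L R g h ∨ Arc L R h g)

/-- Strong connectivity of two vertices. -/
def StrongConn {G : Type*} [Group G] (L R : Set G) (g h : G) : Prop :=
  DPath L R g h ∧ DPath L R h g

/-! A path of length `n` from `g` to `h` in `2S(G;L,R)` is the same as a factorisation
`h = u * g * v` with `u` a word of length `n` in `L⁻¹` and `v` a word of length `n` in `R`.
Reversing all arcs of `2S(G;L,R)` gives `2S(G;L⁻¹,R⁻¹)`, so paths into `1` are handled like
paths out of `1`. The pairs `(a, b)` such that `1` is a word of length `a` in `L⁻¹` times a word
of length `b` in `R` form an additive submonoid of `ℕ × ℕ`; once it contains `(i + 1, i)` and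
`(j, j + 1)` it contains a pair `(m + p, m + q)` for all `p, q`, and inserting such a
factorisation of `1` in the middle of `g = u * v` balances the lengths of `u` and `v`. -/

section Words

variable {G : Type*} [Group G] {S : Set G}

theorem isWord_iff_mem_pow {n : ℕ} {w : G} : IsWord S n w ↔ w ∈ S ^ n := by
  induction n generalizing w with
  | zero =>
    rw [pow_zero, Set.mem_one]
    constructor
    · rintro ⟨l, hl, -, rfl⟩
      rw [List.length_eq_zero_iff.1 hl, List.prod_nil]
    · rintro rfl
      exact ⟨[], rfl, by simp, rfl⟩
  | succ n ih =>
    simp_rw [pow_succ', Set.mem_mul, ← ih]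
    constructor
    · rintro ⟨_ | ⟨x, l⟩, hl, hS, rfl⟩
      · simp at hl
      · exact ⟨x, hS x List.mem_cons_self, l.prod,
          ⟨l, by simpa using hl, fun y hy => hS y (List.mem_cons_of_mem x hy), rfl⟩, rfl⟩
    · rintro ⟨x, hx, _, ⟨l, rfl, hS, rfl⟩, rfl⟩
      exact ⟨x :: l, rfl, by simpa [hx] using hS, List.prod_cons⟩

theorem mem_wordSet_iff {w : G} : w ∈ WordSet S ↔ ∃ n, w ∈ S ^ (n + 1) := by
  simp only [WordSet, Set.mem_ofPred_eq, isWord_iff_mem_pow]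
  exact ⟨fun ⟨n, hn, hw⟩ => ⟨n - 1, by rwa [Nat.sub_add_cancel hn]⟩,
    fun ⟨n, hw⟩ => ⟨n + 1, n.succ_pos, hw⟩⟩

end Words

section Exponents

variable {M : Type*} [Monoid M]

def identityExponents (A B : Set M) : AddSubmonoid (ℕ × ℕ) where
  carrier := {p | (1 : M) ∈ A ^ p.1 * B ^ p.2}
  zero_mem' := by simp
  add_mem' := by
    rintro ⟨a, b⟩ ⟨c, d⟩ hab hcd
    obtain ⟨u₁, hu₁, v₁, hv₁, h₁⟩ := Set.mem_mul.1 hab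
    obtain ⟨u₂, hu₂, v₂, hv₂, h₂⟩ := Set.mem_mul.1 hcd
    show (1 : M) ∈ A ^ (a + c) * B ^ (b + d)
    refine Set.mem_mul.2 ⟨u₁ * u₂, ?_, v₂ * v₁, ?_, ?_⟩
    · rw [pow_add]
      exact Set.mul_mem_mul hu₁ hu₂
    · rw [add_comm, pow_add]
      exact Set.mul_mem_mul hv₂ hv₁
    · calc u₁ * u₂ * (v₂ * v₁) = u₁ * (u₂ * v₂) * v₁ := by simp only [mul_assoc]
        _ = 1 := by rw [h₂, mul_one, h₁]

theorem mem_identityExponents {A B : Set M} {a b : ℕ} :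
    (a, b) ∈ identityExponents A B ↔ (1 : M) ∈ A ^ a * B ^ b :=
  Iff.rfl

theorem exists_add_mem_identityExponents {A B : Set M} {i j : ℕ}
    (hi : (i + 1, i) ∈ identityExponents A B) (hj : (j, j + 1) ∈ identityExponents A B)
    (p q : ℕ) : ∃ m, (m + p, m + q) ∈ identityExponents A B := by
  refine ⟨p * i + q * j, ?_⟩
  convert add_mem (nsmul_mem hi p) (nsmul_mem hj q) using 1
  simp only [Prod.smul_mk, Prod.mk_add_mk, smul_eq_mul, Prod.mk.injEq]
  constructor <;> ring

end Exponents

section Digraph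

variable {G : Type*} [Group G] {L R : Set G}

theorem identityExponents_inv (A B : Set G) :
    identityExponents A⁻¹ B⁻¹ = identityExponents A B := by
  ext ⟨a, b⟩
  simp only [mem_identityExponents, inv_pow, Set.mem_mul, Set.mem_inv]
  constructor
  · rintro ⟨u, hu, v, hv, huv⟩
    exact ⟨u⁻¹, hu, v⁻¹, hv, by rw [← mul_inv_rev, inv_eq_one, mul_eq_one_comm, huv]⟩
  · rintro ⟨u, hu, v, hv, huv⟩
    exact ⟨u⁻¹, by rwa [inv_inv], v⁻¹, by rwa [inv_inv],
      by rw [← mul_inv_rev, inv_eq_one, mul_eq_one_comm, huv]⟩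

theorem exists_isWord_mul_eq_one_iff {a b : ℕ} :
    (∃ u v : G, IsWord L a u ∧ IsWord R b v ∧ u * v = 1) ↔ (a, b) ∈ identityExponents L R := by
  simp only [mem_identityExponents, isWord_iff_mem_pow, Set.mem_mul, exists_and_left]

theorem dPath_iff {g h : G} :
    DPath L R g h ↔ ∃ n, ∃ u ∈ L⁻¹ ^ n, ∃ v ∈ R ^ n, u * g * v = h := by
  constructor
  · intro hp
    induction hp with
    | refl => exact ⟨0, 1, by simp, 1, by simp, by group⟩
    | tail _ harc ih =>
      obtain ⟨n, u, hu, v, hv, rfl⟩ := ih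
      obtain ⟨l, hl, r, hr, rfl⟩ := harc
      refine ⟨n + 1, l⁻¹ * u, ?_, v * r, ?_, by group⟩
      · rw [pow_succ']
        exact Set.mul_mem_mul (Set.inv_mem_inv.2 hl) hu
      · rw [pow_succ]
        exact Set.mul_mem_mul hv hr
  · rintro ⟨n, hn⟩
    induction n generalizing h with
    | zero =>
      obtain ⟨u, hu, v, hv, rfl⟩ := hn
      rw [pow_zero, Set.mem_one] at hu hv
      subst hu hv
      rw [one_mul, mul_one]
      exact ReflTransGen.refl
    | succ n ih =>
      rw [pow_succ', pow_succ] at hn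
      obtain ⟨_, ⟨a, ha, u, hu, rfl⟩, _, ⟨v, hv, r, hr, rfl⟩, rfl⟩ := hn
      exact ReflTransGen.tail (ih ⟨u, hu, v, hv, rfl⟩) ⟨a⁻¹, ha, r, hr, by group⟩

theorem dPath_inv_inv_iff {g h : G} : DPath L⁻¹ R⁻¹ g h ↔ DPath L R h g := by
  have hswap : Arc L⁻¹ R⁻¹ = Function.swap (Arc L R) := by
    ext g h
    constructor
    · rintro ⟨l, hl, r, hr, rfl⟩
      exact ⟨l⁻¹, hl, r⁻¹, hr, by group⟩
    · rintro ⟨l, hl, r, hr, rfl⟩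
      exact ⟨l⁻¹, Set.inv_mem_inv.2 hl, r⁻¹, Set.inv_mem_inv.2 hr, by group⟩
  rw [DPath, DPath, hswap, reflTransGen_swap]

theorem wordSet_inv_mul_wordSet_eq_univ (hL : L.Nonempty) (hR : R.Nonempty)
    (hconn : ∀ g h, DPath L R g h) : WordSet L⁻¹ * WordSet R = Set.univ := by
  obtain ⟨l, hl⟩ := hL
  obtain ⟨r, hr⟩ := hR
  refine Set.eq_univ_of_forall fun g => ?_
  obtain ⟨n, u, hu, v, hv, rfl⟩ := dPath_iff.1 (hconn (l⁻¹ * r) g)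
  refine ⟨u * l⁻¹, mem_wordSet_iff.2 ⟨n, ?_⟩, r * v, mem_wordSet_iff.2 ⟨n, ?_⟩, by group⟩
  · rw [pow_succ]
    exact Set.mul_mem_mul hu (Set.inv_mem_inv.2 hl)
  · rw [pow_succ']
    exact Set.mul_mem_mul hr hv

theorem exists_succ_mem_identityExponents (hL : L.Nonempty) (hconn : ∀ g, DPath L R 1 g) :
    ∃ i, (i + 1, i) ∈ identityExponents L⁻¹ R := by
  obtain ⟨l, hl⟩ := hL
  obtain ⟨n, u, hu, v, hv, huv⟩ := dPath_iff.1 (hconn l)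
  refine ⟨n, l⁻¹ * u, ?_, v, hv, by rw [← huv]; group⟩
  rw [pow_succ']
  exact Set.mul_mem_mul (Set.inv_mem_inv.2 hl) hu

theorem exists_mem_identityExponents_succ (hR : R.Nonempty) (hconn : ∀ g, DPath L R 1 g) :
    ∃ j, (j, j + 1) ∈ identityExponents L⁻¹ R := by
  obtain ⟨r, hr⟩ := hR
  obtain ⟨n, u, hu, v, hv, huv⟩ := dPath_iff.1 (hconn r⁻¹)
  refine ⟨n, Set.mem_mul.2 ⟨u, hu, v * r, ?_, by rw [← mul_assoc, ← mul_one u, huv]; group⟩⟩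
  rw [pow_succ]
  exact Set.mul_mem_mul hv hr

theorem dPath_one_of_wordSet_inv_mul_wordSet_eq_univ {i j : ℕ}
    (hLR : WordSet L⁻¹ * WordSet R = Set.univ) (hi : (i + 1, i) ∈ identityExponents L⁻¹ R)
    (hj : (j, j + 1) ∈ identityExponents L⁻¹ R) (g : G) : DPath L R 1 g := by
  obtain ⟨a, ha, b, hb, rfl⟩ : g ∈ WordSet L⁻¹ * WordSet R := hLR ▸ Set.mem_univ g
  obtain ⟨s, ha⟩ := mem_wordSet_iff.1 ha
  obtain ⟨t, hb⟩ := mem_wordSet_iff.1 hb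
  obtain ⟨m, hm⟩ := exists_add_mem_identityExponents hi hj (t + 1) (s + 1)
  obtain ⟨w, hw, z, hz, hwz⟩ := Set.mem_mul.1 (mem_identityExponents.1 hm)
  refine dPath_iff.2 ⟨s + 1 + (m + (t + 1)), a * w, ?_, z * b, ?_, ?_⟩
  · rw [pow_add]
    exact Set.mul_mem_mul ha hw
  · rw [show s + 1 + (m + (t + 1)) = m + (s + 1) + (t + 1) by ring, pow_add]
    exact Set.mul_mem_mul hz hb
  · calc a * w * 1 * (z * b) = a * (w * z) * b := by simp only [mul_one, mul_assoc]
      _ = a * b := by rw [hwz, mul_one]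

end Digraph

theorem stmt_0 {G : Type*} [Group G] (L R : Set G) (hL : L.Nonempty) (hR : R.Nonempty) :
    (∀ g h : G, DPath L R g h) ↔
      (WordSet L⁻¹ * WordSet R = Set.univ ∧ WordSet L * WordSet R⁻¹ = Set.univ ∧
        ∃ i j : ℕ,
          (∃ u v : G, IsWord L⁻¹ (i + 1) u ∧ IsWord R i v ∧ u * v = 1) ∧
          (∃ u v : G, IsWord L⁻¹ j u ∧ IsWord R (j + 1) v ∧ u * v = 1)) := by
  simp only [exists_isWord_mul_eq_one_iff]
  constructor
  · intro hconn
    have hconn_inv : ∀ g h, DPath L⁻¹ R⁻¹ g h := fun g h => dPath_inv_inv_iff.2 (hconn h g)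
    obtain ⟨i, hi⟩ := exists_succ_mem_identityExponents hL (hconn 1)
    obtain ⟨j, hj⟩ := exists_mem_identityExponents_succ hR (hconn 1)
    refine ⟨wordSet_inv_mul_wordSet_eq_univ hL hR hconn, ?_, i, j, hi, hj⟩
    simpa only [inv_inv] using wordSet_inv_mul_wordSet_eq_univ hL.inv hR.inv hconn_inv
  · rintro ⟨hLR, hLR_inv, i, j, hi, hj⟩ g h
    rw [← inv_inv L] at hLR_inv
    have hi_inv : (i + 1, i) ∈ identityExponents L⁻¹⁻¹ R⁻¹ := by rwa [identityExponents_inv]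
    have hj_inv : (j, j + 1) ∈ identityExponents L⁻¹⁻¹ R⁻¹ := by rwa [identityExponents_inv]
    have hg := dPath_one_of_wordSet_inv_mul_wordSet_eq_univ hLR_inv hi_inv hj_inv g
    exact (dPath_inv_inv_iff.1 hg).trans (dPath_one_of_wordSet_inv_mul_wordSet_eq_univ hLR hi hj h)
end

section
/- In the two-sided group digraph 2S(G;L,R), if W(L) and W(R) are subgroups of G, then there is a directed path from g to h if and only if there is a directed path from h to g. -/
open Relation

/-!
If `l ∈ L` and `l⁻¹` is a word of length `a` in `L`, then `1 = l * l⁻¹` is a word of length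
`1 + a`, so `l⁻¹` is also a word of every length `a + k (1 + a)`. Doing the same for `r ∈ R` with
`r⁻¹` of length `b`, both inverses are words of the common length `a + b + a b`, which gives a
path reversing the arc `g → l⁻¹ g r`. Reversing arcs one at a time reverses every path.
-/

section

variable {G : Type*} [Group G] {S L R : Set G}

lemma isWord_zero_one (S : Set G) : IsWord S 0 1 :=
  ⟨[], rfl, by simp, rfl⟩

lemma isWord_one_of_mem {s : G} (hs : s ∈ S) : IsWord S 1 s :=
  ⟨[s], rfl, by simpa using hs, by simp⟩

lemma IsWord.mul {m n : ℕ} {u v : G} (hu : IsWord S m u) (hv : IsWord S n v) :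
    IsWord S (m + n) (u * v) := by
  obtain ⟨l₁, rfl, hl₁, rfl⟩ := hu
  obtain ⟨l₂, rfl, hl₂, rfl⟩ := hv
  exact ⟨l₁ ++ l₂, List.length_append,
    fun x hx => (List.mem_append.1 hx).elim (hl₁ x) (hl₂ x), List.prod_append⟩

lemma IsWord.pow {n : ℕ} {w : G} (hw : IsWord S n w) (k : ℕ) :
    IsWord S (k * n) (w ^ k) := by
  induction k with
  | zero => simpa using isWord_zero_one S
  | succ k ih => simpa [pow_succ, Nat.succ_mul] using ih.mul hw

lemma IsWord.add_mul_of_isWord_one {a p : ℕ} {w : G} (hw : IsWord S a w)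
    (h₁ : IsWord S p 1) (k : ℕ) : IsWord S (a + k * p) w := by
  simpa using hw.mul (h₁.pow k)

lemma IsWord.exists_cons {n : ℕ} {w : G} (hw : IsWord S (n + 1) w) :
    ∃ s ∈ S, ∃ w', IsWord S n w' ∧ w = s * w' := by
  obtain ⟨_ | ⟨s, l⟩, hlen, hl, rfl⟩ := hw
  · simp at hlen
  · exact ⟨s, hl s (by simp), l.prod, ⟨l, by simpa using hlen, fun x hx => hl x (by simp [hx]),
      rfl⟩, List.prod_cons⟩

lemma dPath_of_isWord {n : ℕ} {u v : G} (hu : IsWord L n u) (hv : IsWord R n v)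
    (g : G) : DPath L R g (u⁻¹ * g * v) := by
  induction n generalizing u v g with
  | zero =>
    obtain ⟨l₁, hl₁, -, rfl⟩ := hu
    obtain ⟨l₂, hl₂, -, rfl⟩ := hv
    simp only [List.length_eq_zero_iff.1 hl₁, List.length_eq_zero_iff.1 hl₂, List.prod_nil,
      inv_one, one_mul, mul_one]
    exact ReflTransGen.refl
  | succ n ih =>
    obtain ⟨l, hl, u', hu', rfl⟩ := hu.exists_cons
    obtain ⟨r, hr, v', hv', rfl⟩ := hv.exists_cons
    have hpath := ih hu' hv' (l⁻¹ * g * r)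
    rw [show u'⁻¹ * (l⁻¹ * g * r) * v' = (l * u')⁻¹ * g * (r * v') by group] at hpath
    exact ReflTransGen.head ⟨l, hl, r, hr, rfl⟩ hpath

lemma exists_isWord_inv_inv {l r : G} (hl : l ∈ L) (hr : r ∈ R)
    (hl' : l⁻¹ ∈ WordSet L) (hr' : r⁻¹ ∈ WordSet R) :
    ∃ n, IsWord L n l⁻¹ ∧ IsWord R n r⁻¹ := by
  obtain ⟨a, -, ha⟩ := hl'
  obtain ⟨b, -, hb⟩ := hr'
  have hL₁ : IsWord L (1 + a) 1 := by simpa using (isWord_one_of_mem hl).mul ha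
  have hR₁ : IsWord R (1 + b) 1 := by simpa using (isWord_one_of_mem hr).mul hb
  refine ⟨a + b * (1 + a), ha.add_mul_of_isWord_one hL₁ b, ?_⟩
  rw [show a + b * (1 + a) = b + a * (1 + b) by ring]
  exact hb.add_mul_of_isWord_one hR₁ a

lemma Arc.dPath_symm (hL : ∀ l ∈ L, l⁻¹ ∈ WordSet L)
    (hR : ∀ r ∈ R, r⁻¹ ∈ WordSet R) {g h : G} (harc : Arc L R g h) : DPath L R h g := by
  obtain ⟨l, hl, r, hr, rfl⟩ := harc
  obtain ⟨n, hu, hv⟩ := exists_isWord_inv_inv hl hr (hL l hl) (hR r hr)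
  simpa [mul_assoc] using dPath_of_isWord hu hv (l⁻¹ * g * r)

lemma DPath.symm (hL : ∀ l ∈ L, l⁻¹ ∈ WordSet L)
    (hR : ∀ r ∈ R, r⁻¹ ∈ WordSet R) {g h : G} (hp : DPath L R g h) : DPath L R h g := by
  induction hp with
  | refl => exact ReflTransGen.refl
  | tail _ harc ih => exact (harc.dPath_symm hL hR).trans ih

lemma inv_mem_wordSet_of_mem (hS : ∃ H : Subgroup G, WordSet S = (H : Set G))
    {s : G} (hs : s ∈ S) : s⁻¹ ∈ WordSet S := by
  obtain ⟨H, hH⟩ := hS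
  have hs' : s ∈ WordSet S := ⟨1, one_pos, isWord_one_of_mem hs⟩
  rw [hH] at hs' ⊢
  exact H.inv_mem hs'

end

theorem stmt_3_general {G : Type*} [Group G] (L R : Set G)
    (hWL : ∃ H : Subgroup G, WordSet L = (H : Set G))
    (hWR : ∃ H : Subgroup G, WordSet R = (H : Set G)) :
    ∀ g h : G, DPath L R g h ↔ DPath L R h g := by
  have hL : ∀ l ∈ L, l⁻¹ ∈ WordSet L := fun _ => inv_mem_wordSet_of_mem hWL
  have hR : ∀ r ∈ R, r⁻¹ ∈ WordSet R := fun _ => inv_mem_wordSet_of_mem hWR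
  exact fun g h => ⟨DPath.symm hL hR, DPath.symm hL hR⟩

theorem stmt_3 {G : Type*} [Group G] (L R : Set G) (hL : L.Nonempty) (hR : R.Nonempty)
    (hWL : ∃ H : Subgroup G, WordSet L = (H : Set G))
    (hWR : ∃ H : Subgroup G, WordSet R = (H : Set G)) :
    ∀ g h : G, DPath L R g h ↔ DPath L R h g :=
  stmt_3_general L R hWL hWR
end

section
/- In 2S(G;L,R), if g = w₁ s w₂ where s ∈ G, w₁ is a word involving m factors from L and a factors from L⁻¹ (in any order), and w₂ is a word involving n factors from R and b factors from R⁻¹, then g is weakly connected to l^d s and to s r^d for any l ∈ L and r ∈ R, where d = m + n − (a + b). -/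
/-! An arc `g → l⁻¹ g r` says that `l * g` and `g * r` are weakly connected: a letter `l ∈ L` to
the left of a vertex can be traded for a letter `r ∈ R` to its right, and likewise a letter of
`L⁻¹` for one of `R⁻¹`. Trading the letters of `w₁` one at a time connects `w₁ * u` to
`u * r ^ (m - a)`, trading those of `w₂` connects `u * w₂` to `l ^ (n - b) * u`, and iterating the
basic trade in both directions connects `l ^ k * u` to `u * r ^ k` for every `k : ℤ`. Combining
the three collects all letters into `l ^ d * s`, or into `s * r ^ d`. -/

open Relation

/-- `w` is a product, in any order, of `m` factors from `S` and `a` factors from `S⁻¹`. -/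
def MixedWord {G : Type*} [Group G] (S : Set G) (m a : ℕ) (w : G) : Prop :=
  ∃ l : List (G × Bool),
    (∀ p ∈ l, (p.2 = true → p.1 ∈ S) ∧ (p.2 = false → p.1 ∈ S⁻¹)) ∧
    (l.filter (fun p => p.2)).length = m ∧
    (l.filter (fun p => !p.2)).length = a ∧
    (l.map Prod.fst).prod = w

section WeakConn

variable {G : Type*} [Group G] {L R : Set G}

theorem WeakConn.symm {g h : G} (hgh : WeakConn L R g h) : WeakConn L R h g := by
  induction hgh with
  | refl => exact .refl
  | tail _ hbc ih => exact ih.head hbc.symm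

instance : Trans (WeakConn L R) (WeakConn L R) (WeakConn L R) :=
  ⟨ReflTransGen.trans⟩

theorem weakConn_mul_mul {l r : G} (hl : l ∈ L) (hr : r ∈ R) (g : G) :
    WeakConn L R (l * g) (g * r) :=
  .single (.inl ⟨l, hl, r, hr, by group⟩)

theorem weakConn_mul_mul_of_mem_inv {l r : G} (hl : l ∈ L⁻¹) (hr : r ∈ R⁻¹) (g : G) :
    WeakConn L R (l * g) (g * r) := by
  convert (weakConn_mul_mul (l := l⁻¹) (r := r⁻¹) hl hr (l * g * r)).symm using 1 <;> group

theorem weakConn_zpow_mul_mul_zpow {l r : G} (hl : l ∈ L) (hr : r ∈ R) (k : ℤ) (g : G) :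
    WeakConn L R (l ^ k * g) (g * r ^ k) := by
  induction k using Int.induction_on generalizing g with
  | zero => simpa using .refl
  | succ k ih =>
    calc l ^ ((k : ℤ) + 1) * g = l ^ (k : ℤ) * (l * g) := by group
      WeakConn L R _ ((l * g) * r ^ (k : ℤ)) := ih _
      _ = l * (g * r ^ (k : ℤ)) := by group
      WeakConn L R _ (g * r ^ (k : ℤ) * r) := weakConn_mul_mul hl hr _
      _ = g * r ^ ((k : ℤ) + 1) := by group
  | pred k ih =>
    calc l ^ (-(k : ℤ) - 1) * g = l ^ (-(k : ℤ)) * (l⁻¹ * g) := by group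
      WeakConn L R _ ((l⁻¹ * g) * r ^ (-(k : ℤ))) := ih _
      _ = l⁻¹ * (g * r ^ (-(k : ℤ))) := by group
      WeakConn L R _ (g * r ^ (-(k : ℤ)) * r⁻¹) :=
        weakConn_mul_mul_of_mem_inv (Set.inv_mem_inv.mpr hl) (Set.inv_mem_inv.mpr hr) _
      _ = g * r ^ (-(k : ℤ) - 1) := by group

theorem MixedWord.weakConn_mul_mul_zpow {w r : G} {m a : ℕ} (hw : MixedWord L m a w)
    (hr : r ∈ R) (u : G) : WeakConn L R (w * u) (u * r ^ ((m : ℤ) - a)) := by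
  obtain ⟨ps, hps, rfl, rfl, rfl⟩ := hw
  induction ps generalizing u with
  | nil => simpa using .refl
  | cons p ps ih =>
    have hps' := fun q hq => hps q (List.mem_cons_of_mem p hq)
    obtain ⟨x, _ | _⟩ := p
    · calc (((x, false) :: ps).map Prod.fst).prod * u
          = x * ((ps.map Prod.fst).prod * u) := by simp [mul_assoc]
        WeakConn L R _ ((ps.map Prod.fst).prod * u * r⁻¹) :=
          weakConn_mul_mul_of_mem_inv ((hps _ List.mem_cons_self).2 rfl)
            (Set.inv_mem_inv.mpr hr) _
        _ = (ps.map Prod.fst).prod * (u * r⁻¹) := mul_assoc ..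
        WeakConn L R _ (u * r⁻¹ * r ^ _) := ih _ hps'
        _ = _ := by
          simp only [List.filter_cons_of_pos, List.filter_cons_of_neg, List.length_cons,
            Nat.cast_add, Nat.cast_one, Bool.not_false, Bool.false_eq_true,
            not_false_eq_true]
          group
    · calc (((x, true) :: ps).map Prod.fst).prod * u
          = x * ((ps.map Prod.fst).prod * u) := by simp [mul_assoc]
        WeakConn L R _ ((ps.map Prod.fst).prod * u * r) :=
          weakConn_mul_mul ((hps _ List.mem_cons_self).1 rfl) hr _
        _ = (ps.map Prod.fst).prod * (u * r) := mul_assoc ..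
        WeakConn L R _ (u * r * r ^ _) := ih _ hps'
        _ = _ := by
          simp only [List.filter_cons_of_pos, List.filter_cons_of_neg, List.length_cons,
            Nat.cast_add, Nat.cast_one, Bool.not_true, Bool.false_eq_true,
            not_false_eq_true]
          group

theorem MixedWord.weakConn_mul_zpow_mul {w l : G} {n b : ℕ} (hw : MixedWord R n b w)
    (hl : l ∈ L) (u : G) : WeakConn L R (u * w) (l ^ ((n : ℤ) - b) * u) := by
  obtain ⟨ps, hps, rfl, rfl, rfl⟩ := hw
  induction ps generalizing u with
  | nil => simpa using .refl
  | cons p ps ih =>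
    have hps' := fun q hq => hps q (List.mem_cons_of_mem p hq)
    obtain ⟨y, _ | _⟩ := p
    · calc u * (((y, false) :: ps).map Prod.fst).prod
          = u * y * (ps.map Prod.fst).prod := by simp [mul_assoc]
        WeakConn L R _ (l ^ _ * (u * y)) := ih _ hps'
        _ = l ^ _ * u * y := (mul_assoc ..).symm
        WeakConn L R _ (l⁻¹ * (l ^ _ * u)) :=
          (weakConn_mul_mul_of_mem_inv (Set.inv_mem_inv.mpr hl)
            ((hps _ List.mem_cons_self).2 rfl) _).symm
        _ = _ := by
          simp only [List.filter_cons_of_pos, List.filter_cons_of_neg, List.length_cons,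
            Nat.cast_add, Nat.cast_one, Bool.not_false, Bool.false_eq_true,
            not_false_eq_true]
          group
    · calc u * (((y, true) :: ps).map Prod.fst).prod
          = u * y * (ps.map Prod.fst).prod := by simp [mul_assoc]
        WeakConn L R _ (l ^ _ * (u * y)) := ih _ hps'
        _ = l ^ _ * u * y := (mul_assoc ..).symm
        WeakConn L R _ (l * (l ^ _ * u)) :=
          (weakConn_mul_mul hl ((hps _ List.mem_cons_self).1 rfl) _).symm
        _ = _ := by
          simp only [List.filter_cons_of_pos, List.filter_cons_of_neg, List.length_cons,
            Nat.cast_add, Nat.cast_one, Bool.not_true, Bool.false_eq_true,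
            not_false_eq_true]
          group

end WeakConn

theorem stmt_6_general {G : Type*} [Group G] (L R : Set G)
    (g s w₁ w₂ : G) (m a n b : ℕ)
    (h₁ : MixedWord L m a w₁) (h₂ : MixedWord R n b w₂) (hg : g = w₁ * s * w₂)
    (d : ℤ) (hd : d = (m : ℤ) + n - ((a : ℤ) + b))
    (l r : G) (hl : l ∈ L) (hr : r ∈ R) :
    WeakConn L R g (l ^ d * s) ∧ WeakConn L R g (s * r ^ d) := by
  subst hg hd
  constructor
  · calc w₁ * s * w₂ = w₁ * (s * w₂) := mul_assoc ..
      WeakConn L R _ (s * w₂ * r ^ ((m : ℤ) - a)) := h₁.weakConn_mul_mul_zpow hr _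
      WeakConn L R _ (l ^ ((m : ℤ) - a) * (s * w₂)) :=
        (weakConn_zpow_mul_mul_zpow hl hr _ _).symm
      _ = l ^ ((m : ℤ) - a) * s * w₂ := (mul_assoc ..).symm
      WeakConn L R _ (l ^ ((n : ℤ) - b) * (l ^ ((m : ℤ) - a) * s)) :=
        h₂.weakConn_mul_zpow_mul hl _
      _ = _ := by group
  · calc WeakConn L R (w₁ * s * w₂) (l ^ ((n : ℤ) - b) * (w₁ * s)) :=
          h₂.weakConn_mul_zpow_mul hl _
      WeakConn L R _ (w₁ * s * r ^ ((n : ℤ) - b)) := weakConn_zpow_mul_mul_zpow hl hr _ _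
      _ = w₁ * (s * r ^ ((n : ℤ) - b)) := mul_assoc ..
      WeakConn L R _ (s * r ^ ((n : ℤ) - b) * r ^ ((m : ℤ) - a)) :=
        h₁.weakConn_mul_mul_zpow hr _
      _ = _ := by group

theorem stmt_6 {G : Type*} [Group G] (L R : Set G) (hL : L.Nonempty) (hR : R.Nonempty)
    (g s w₁ w₂ : G) (m a n b : ℕ)
    (h₁ : MixedWord L m a w₁) (h₂ : MixedWord R n b w₂) (hg : g = w₁ * s * w₂)
    (d : ℤ) (hd : d = (m : ℤ) + n - ((a : ℤ) + b))
    (l r : G) (hl : l ∈ L) (hr : r ∈ R) :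
    WeakConn L R g (l ^ d * s) ∧ WeakConn L R g (s * r ^ d) :=
  stmt_6_general L R g s w₁ w₂ m a n b h₁ h₂ hg d hd l r hl hr
end
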